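/- Let k be a field of characteristic zero and K a Poisson field over k of transcendence degree 2 with nontrivial Poisson bracket. If x, y ∈ K satisfy {x, y} = 0, then x and y are algebraically dependent over k. -/

import Mathlib

/-- A Poisson bracket on a commutative algebra `A` over `k`. -/
structure PoissonBracket (k A : Type*) [CommRing k] [CommRing A] [Algebra k A] where
  bracket : A → A → A
  add_left : ∀ a b c : A, bracket (a + b) c = bracket a c + bracket b c
  smul_left : ∀ (r : k) (a b : A), bracket (r • a) b = r • bracket a b
  antisymm : ∀ a b : A, bracket a b = - bracket b a
  leibniz : ∀ a b c : A, bracket a (b * c) = bracket a b * c + bracket a c * b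
  jacobi : ∀ a b c : A,
    bracket a (bracket b c) + bracket b (bracket c a) + bracket c (bracket a b) = 0

/-!
If `{x, y} = 0` with `x, y` algebraically independent, then `x, y` lie in the centralizer
`C_x = {f | {x, f} = 0}`, a subfield over which the transcendence-degree-2 field `K` is algebraic,
hence separable in characteristic zero. The Hamiltonian derivation `{x, ·}` is `C_x`-linear,
so it vanishes: `C_x = K`. Likewise `C_y = K`; then `x, y` lie in every centralizer `C_a`, so
every `C_a = K` and the bracket is identically zero.
-/

theorem Derivation.eq_zero_of_isSeparable {F K : Type*} [Field F] [Field K] [Algebra F K]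
    [Algebra.IsSeparable F K] (D : Derivation F K K) : D = 0 := by
  have := Algebra.FormallyUnramified.of_isSeparable F K
  exact (KaehlerDifferential.linearMapEquivDerivation F K (M := K)).symm.injective
    (Subsingleton.elim _ _)

theorem AlgebraicIndependent.isAlgebraic_adjoin_pair {k K : Type*} [Field k] [Field K]
    [Algebra k K] {x y t : K} (hxy : AlgebraicIndependent k ![x, y])
    (hxyt : ¬ AlgebraicIndependent k ![x, y, t]) : IsAlgebraic (Algebra.adjoin k {x, y}) t := by
  have hrange : Set.range ![x, y] = {x, y} := by
    rw [Matrix.range_cons, Matrix.range_cons, Matrix.range_empty, Set.union_empty,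
      Set.singleton_union]
  rw [← hrange]
  by_contra ht
  refine hxyt ?_
  convert ((hxy.option_iff_transcendental t).mpr ht).comp ![some 0, some 1, none] (by decide)
  ext i
  fin_cases i <;> rfl

namespace PoissonBracket

section CommRing

variable {k A : Type*} [CommRing k] [CommRing A] [Algebra k A] (P : PoissonBracket k A)

theorem bracket_add_right (a b c : A) :
    P.bracket a (b + c) = P.bracket a b + P.bracket a c := by
  rw [P.antisymm, P.add_left, P.antisymm b, P.antisymm c, neg_add, neg_neg, neg_neg]

theorem bracket_smul_right (r : k) (a b : A) : P.bracket a (r • b) = r • P.bracket a b := by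
  rw [P.antisymm, P.smul_left, P.antisymm b, smul_neg, neg_neg]

theorem bracket_one_right (a : A) : P.bracket a 1 = 0 := by
  simpa using P.leibniz a 1 1

theorem bracket_eq_zero_comm {a b : A} : P.bracket a b = 0 ↔ P.bracket b a = 0 := by
  rw [P.antisymm, neg_eq_zero]

theorem bracket_self [NoZeroDivisors A] [CharZero A] (a : A) : P.bracket a a = 0 :=
  add_self_eq_zero.mp (by linear_combination P.antisymm a a)

end CommRing

section Field

variable {k K : Type*} [Field k] [Field K] [Algebra k K] (P : PoissonBracket k K)

def centralizer (a : K) : IntermediateField k K where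
  carrier := {f | P.bracket a f = 0}
  mul_mem' {b c} hb hc := by
    simp only [Set.mem_ofPred_eq] at hb hc ⊢
    rw [P.leibniz, hb, hc, zero_mul, zero_mul, add_zero]
  add_mem' {b c} hb hc := by
    simp only [Set.mem_ofPred_eq] at hb hc ⊢
    rw [P.bracket_add_right, hb, hc, add_zero]
  algebraMap_mem' r := by
    simp only [Set.mem_ofPred_eq, Algebra.algebraMap_eq_smul_one]
    rw [P.bracket_smul_right, P.bracket_one_right, smul_zero]
  inv_mem' b hb := by
    rcases eq_or_ne b 0 with rfl | hb0
    · rwa [inv_zero]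
    have h := P.leibniz a b b⁻¹
    rw [mul_inv_cancel₀ hb0, P.bracket_one_right, show P.bracket a b = 0 from hb, zero_mul,
      zero_add, zero_eq_mul] at h
    exact h.resolve_right hb0

theorem mem_centralizer {a f : K} : f ∈ P.centralizer a ↔ P.bracket a f = 0 := Iff.rfl

theorem centralizer_eq_top_iff {a : K} : P.centralizer a = ⊤ ↔ ∀ f, P.bracket a f = 0 :=
  ⟨fun h _ ↦ P.mem_centralizer.mp (h ▸ IntermediateField.mem_top),
    fun h ↦ eq_top_iff.mpr fun f _ ↦ h f⟩

def hamiltonian (a : K) : Derivation (P.centralizer a) K K where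
  toFun := P.bracket a
  map_add' := P.bracket_add_right a
  map_smul' r b := by
    rw [Algebra.smul_def, Algebra.smul_def, P.leibniz, IntermediateField.algebraMap_apply,
      P.mem_centralizer.mp r.2, zero_mul, zero_add, mul_comm]
    rfl
  map_one_eq_zero' := P.bracket_one_right a
  leibniz' b c := by
    change P.bracket a (b * c) = b * P.bracket a c + c * P.bracket a b
    rw [P.leibniz, mul_comm b, mul_comm c, add_comm]

theorem centralizer_eq_top [CharZero k] {x y : K} (hxy : AlgebraicIndependent k ![x, y])
    (hmax : ∀ t : K, ¬ AlgebraicIndependent k ![x, y, t]) {a : K}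
    (hx : x ∈ P.centralizer a) (hy : y ∈ P.centralizer a) : P.centralizer a = ⊤ := by
  have hle : Algebra.adjoin k {x, y} ≤ (P.centralizer a).toSubalgebra :=
    Algebra.adjoin_le (Set.insert_subset hx (Set.singleton_subset_iff.mpr hy))
  have : Algebra.IsAlgebraic (P.centralizer a) K :=
    ⟨fun t ↦ (hxy.isAlgebraic_adjoin_pair (hmax t)).tower_top_of_subalgebra_le hle⟩
  have : P.hamiltonian a = 0 := Derivation.eq_zero_of_isSeparable _
  exact P.centralizer_eq_top_iff.mpr fun t ↦ DFunLike.congr_fun this t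

end Field

end PoissonBracket

theorem stmt4_general (k K : Type*) [Field k] [CharZero k] [Field K] [Algebra k K]
    (P : PoissonBracket k K)
    (htr2' : ∀ a b c : K, ¬ AlgebraicIndependent k ![a, b, c])
    (hnt : ∃ a b : K, P.bracket a b ≠ 0)
    (x y : K) (hxy : P.bracket x y = 0) :
    ¬ AlgebraicIndependent k ![x, y] := by
  intro hind
  have : CharZero K := charZero_of_injective_algebraMap (algebraMap k K).injective
  have hcasimir {a : K} (hx : P.bracket a x = 0) (hy : P.bracket a y = 0) :
      ∀ f, P.bracket a f = 0 :=
    P.centralizer_eq_top_iff.mp (P.centralizer_eq_top hind (htr2' x y) hx hy)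
  have hX := hcasimir (P.bracket_self x) hxy
  have hY := hcasimir (P.bracket_eq_zero_comm.mp hxy) (P.bracket_self y)
  obtain ⟨a, b, hab⟩ := hnt
  exact hab (hcasimir (P.bracket_eq_zero_comm.mp (hX a)) (P.bracket_eq_zero_comm.mp (hY a)) b)

/-- let `k` have characteristic zero and let `K` be a Poisson field
over `k` of transcendence degree 2 (there exist two algebraically independent
elements, but no three) with nontrivial Poisson bracket.  If `{x, y} = 0` then
`x` and `y` are algebraically dependent over `k`. -/
theorem stmt4 (k K : Type*) [Field k] [CharZero k] [Field K] [Algebra k K]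
    (P : PoissonBracket k K)
    (htr2 : ∃ a b : K, AlgebraicIndependent k ![a, b])
    (htr2' : ∀ a b c : K, ¬ AlgebraicIndependent k ![a, b, c])
    (hnt : ∃ a b : K, P.bracket a b ≠ 0)
    (x y : K) (hxy : P.bracket x y = 0) :
    ¬ AlgebraicIndependent k ![x, y] :=
  stmt4_general k K P htr2' hnt x y hxy
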